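/- Let V(t) = V₀·exp(-t/τₘ) + I₀·(τₛ/(τₘ-τₛ))·(exp(-t/τₘ) - exp(-t/τₛ)) with τₘ > τₛ > 0. If V has a critical point at t* > a and V'(a) > 0, then V is strictly monotone increasing on [a, t*] and strictly decreasing on [t*, ∞). -/
import Mathlib


/-- If the LIF voltage has a critical point at `t* > a` and `V'(a) > 0`, then `V` is
strictly increasing on `[a, t*]` and strictly decreasing on `[t*, ∞)`. -/
theorem stmt_8 (τm τs V0 I0 a tstar : ℝ) (hs : 0 < τs) (hms : τs < τm)
    (V : ℝ → ℝ)
    (hV : V = fun t => V0 * Real.exp (-t / τm) +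
        I0 * (τs / (τm - τs)) * (Real.exp (-t / τm) - Real.exp (-t / τs)))
    (hat : a < tstar)
    (hcrit : deriv V tstar = 0)
    (hinc : 0 < deriv V a) :
    StrictMonoOn V (Set.Icc a tstar) ∧ StrictAntiOn V (Set.Ici tstar) := by
  have hτm : (0:ℝ) < τm := hs.trans hms
  have hτm0 : τm ≠ 0 := ne_of_gt hτm
  have hτs0 : τs ≠ 0 := ne_of_gt hs
  set k := I0 * (τs / (τm - τs)) with hk
  set c := -(V0 + k)/τm with hc
  set d := k/τs with hd
  have hm : ∀ t : ℝ, HasDerivAt (fun t : ℝ => Real.exp (-t/τm))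
      (Real.exp (-t/τm) * (-1/τm)) t := by
    intro t
    have h0 : HasDerivAt (fun t : ℝ => -t/τm) (-1/τm) t := by
      simpa using ((hasDerivAt_id t).neg.div_const τm)
    exact (Real.hasDerivAt_exp _).comp t h0
  have hss : ∀ t : ℝ, HasDerivAt (fun t : ℝ => Real.exp (-t/τs))
      (Real.exp (-t/τs) * (-1/τs)) t := by
    intro t
    have h0 : HasDerivAt (fun t : ℝ => -t/τs) (-1/τs) t := by
      simpa using ((hasDerivAt_id t).neg.div_const τs)
    exact (Real.hasDerivAt_exp _).comp t h0
  have hder : ∀ t : ℝ, HasDerivAt V (c * Real.exp (-t/τm) + d * Real.exp (-t/τs)) t := by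
    intro t
    have hV' : HasDerivAt V (V0 * (Real.exp (-t/τm) * (-1/τm)) +
        k * (Real.exp (-t/τm) * (-1/τm) - Real.exp (-t/τs) * (-1/τs))) t := by
      rw [hV]
      exact ((hm t).const_mul V0).add (((hm t).sub (hss t)).const_mul k)
    convert hV' using 1
    rw [hc, hd]
    field_simp
    ring
  have hderiv : ∀ t : ℝ, deriv V t = c * Real.exp (-t/τm) + d * Real.exp (-t/τs) :=
    fun t => (hder t).deriv
  -- factorized form
  have hfac : ∀ t : ℝ, deriv V t =
      Real.exp (-t/τm) * (c + d * Real.exp (t/τm - t/τs)) := by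
    intro t
    rw [hderiv t]
    have : Real.exp (-t/τs) = Real.exp (-t/τm) * Real.exp (t/τm - t/τs) := by
      rw [← Real.exp_add]; ring_nf
    rw [this]; ring
  -- from hcrit: c = -d * exp(f t*)
  have hc' : c = -d * Real.exp (tstar/τm - tstar/τs) := by
    have h := hcrit
    rw [hfac tstar] at h
    have hE : Real.exp (-tstar/τm) ≠ 0 := Real.exp_ne_zero _
    have := mul_eq_zero.mp h
    rcases this with h' | h'
    · exact absurd h' hE
    · linarith
  have hfac2 : ∀ t : ℝ, deriv V t =
      Real.exp (-t/τm) * d * (Real.exp (t/τm - t/τs) - Real.exp (tstar/τm - tstar/τs)) := by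
    intro t
    rw [hfac t, hc']
    ring
  -- f strictly decreasing
  have hrec : 1/τm - 1/τs < 0 := by
    have : 1/τm < 1/τs := one_div_lt_one_div_of_lt hs hms
    linarith
  have hfdec : ∀ s t : ℝ, s < t → t/τm - t/τs < s/τm - s/τs := by
    intro s t hst
    have h1 : t * (1/τm - 1/τs) < s * (1/τm - 1/τs) :=
      mul_lt_mul_of_neg_right hst hrec
    have e1 : t/τm - t/τs = t * (1/τm - 1/τs) := by field_simp
    have e2 : s/τm - s/τs = s * (1/τm - 1/τs) := by field_simp
    linarith [h1, e1.ge, e1.le, e2.ge, e2.le]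
  -- d > 0
  have hd0 : 0 < d := by
    have ha := hinc
    rw [hfac2 a] at ha
    have hE : 0 < Real.exp (-a/τm) := Real.exp_pos _
    have hdiff : 0 < Real.exp (a/τm - a/τs) - Real.exp (tstar/τm - tstar/τs) := by
      have := hfdec a tstar hat
      have := Real.exp_lt_exp.mpr this
      linarith
    nlinarith [mul_pos hE hdiff]
  -- sign of deriv
  have hpos : ∀ t ∈ Set.Ioo a tstar, 0 < deriv V t := by
    intro t ht
    rw [hfac2 t]
    have hE : 0 < Real.exp (-t/τm) := Real.exp_pos _
    have hdiff : 0 < Real.exp (t/τm - t/τs) - Real.exp (tstar/τm - tstar/τs) := by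
      have := hfdec t tstar ht.2
      have := Real.exp_lt_exp.mpr this
      linarith
    positivity
  have hneg : ∀ t ∈ Set.Ioi tstar, deriv V t < 0 := by
    intro t ht
    rw [hfac2 t]
    have hE : 0 < Real.exp (-t/τm) := Real.exp_pos _
    have hdiff : Real.exp (t/τm - t/τs) - Real.exp (tstar/τm - tstar/τs) < 0 := by
      have := hfdec tstar t ht
      have := Real.exp_lt_exp.mpr this
      linarith
    nlinarith [mul_pos hE hd0]
  have hcm : Continuous fun t : ℝ => Real.exp (-t/τm) :=
    Real.continuous_exp.comp ((continuous_id.neg).div_const τm)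
  have hcs : Continuous fun t : ℝ => Real.exp (-t/τs) :=
    Real.continuous_exp.comp ((continuous_id.neg).div_const τs)
  have hcont : Continuous V := by
    rw [hV]
    exact ((continuous_const.mul hcm)).add (continuous_const.mul (hcm.sub hcs))
  constructor
  · refine strictMonoOn_of_deriv_pos (convex_Icc a tstar) hcont.continuousOn ?_
    intro t ht
    rw [interior_Icc] at ht
    exact hpos t ht
  · refine strictAntiOn_of_deriv_neg (convex_Ici tstar) hcont.continuousOn ?_
    intro t ht
    rw [interior_Ici] at ht
    exact hneg t ht
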